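/- Generalized Chernoff bound: let X_1, ..., X_m be Boolean (0/1-valued) random variables, not necessarily independent, such that for every subset S ⊆ {1,...,m}, Pr(⋀_{i∈S} X_i = 1) ≤ p^{|S|}. Then for any δ > 0, Pr(Σ X_i ≥ (1+δ) m p) ≤ (e^δ / (1+δ)^{1+δ})^{m p}. -/
import Mathlib


open MeasureTheory

lemma sum_powerset_pow_card {α : Type*} [DecidableEq α] (s : Finset α) (x : ℝ) :
    ∑ S ∈ s.powerset, x ^ S.card = (1 + x) ^ s.card := by
  rw [← Finset.prod_const, add_comm (1:ℝ) x, Finset.prod_add]; simp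

/-- Generalized Chernoff bound (Panconesi–Srinivasan): let `X_1, ..., X_m` be
Boolean (0/1-valued) random variables, not necessarily independent, such that for
every subset `S ⊆ {1,...,m}`, `Pr(⋀_{i∈S} X_i = 1) ≤ p^|S|`. Then for any `δ > 0`,
`Pr(Σ X_i ≥ (1+δ) m p) ≤ (e^δ / (1+δ)^(1+δ))^(m p)`. -/
theorem generalized_chernoff {Ω : Type*} [MeasurableSpace Ω]
    (μ : Measure Ω) [IsProbabilityMeasure μ]
    (m : ℕ) (X : Fin m → Ω → ℝ) (hbool : ∀ i ω, X i ω = 0 ∨ X i ω = 1)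
    (p : ℝ) (hp0 : 0 ≤ p) (hp1 : p ≤ 1)
    (hS : ∀ S : Finset (Fin m),
      μ {ω | ∀ i ∈ S, X i ω = 1} ≤ ENNReal.ofReal (p ^ S.card))
    (δ : ℝ) (hδ : 0 < δ) :
    μ {ω | (1 + δ) * m * p ≤ ∑ i, X i ω} ≤
      ENNReal.ofReal ((Real.exp δ / (1 + δ) ^ (1 + δ)) ^ (m * p)) := by
  classical
  have h1δ : (1:ℝ) < 1 + δ := by linarith
  set a : ℝ := (1 + δ) * m * p with ha
  set E : Finset (Fin m) → Set Ω := fun S => {ω | ∀ i ∈ S, X i ω = 1} with hE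
  set H : Finset (Fin m) → Set Ω := fun S => toMeasurable μ (E S) with hH
  set f : Ω → ENNReal := fun ω =>
    ∑ S : Finset (Fin m), ENNReal.ofReal (δ ^ S.card) * (H S).indicator 1 ω with hf
  have hfmeas : Measurable f := by
    apply Finset.measurable_sum
    intro S _
    exact (measurable_const.indicator (measurableSet_toMeasurable μ _)).const_mul _
  set c : ENNReal := ENNReal.ofReal ((1 + δ) ^ a) with hc
  -- pointwise bound
  have hpt : {ω | a ≤ ∑ i, X i ω} ⊆ {ω | c ≤ f ω} := by
    intro ω hω
    set T : Finset (Fin m) := Finset.univ.filter (fun i => X i ω = 1) with hT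
    have hYT : ∑ i, X i ω = T.card := by
      have : ∑ i, X i ω = ∑ i : Fin m, (if X i ω = 1 then (1:ℝ) else 0) := by
        apply Finset.sum_congr rfl
        intro i _
        rcases hbool i ω with h | h <;> simp [h]
      rw [this, hT, Finset.card_filter]
      push_cast
      rfl
    have h1 : (1 + δ) ^ a ≤ (1 + δ) ^ (T.card : ℕ) := by
      rw [← Real.rpow_natCast (1 + δ) T.card]
      rw [Real.rpow_le_rpow_left_iff h1δ]
      rw [Set.mem_setOf_eq, hYT] at hω
      exact hω
    have h2 : (1 + δ) ^ (T.card : ℕ) = ∑ S ∈ T.powerset, δ ^ S.card :=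
      (sum_powerset_pow_card T δ).symm
    have h3 : ∀ S ∈ T.powerset, (H S).indicator (1 : Ω → ENNReal) ω = 1 := by
      intro S hSm
      have hωE : ω ∈ E S := by
        intro i hi
        have := Finset.mem_powerset.mp hSm hi
        simpa [hT] using this
      have : ω ∈ H S := subset_toMeasurable μ _ hωE
      simp [Set.indicator_of_mem this]
    calc c = ENNReal.ofReal ((1 + δ) ^ a) := rfl
      _ ≤ ENNReal.ofReal ((1 + δ) ^ (T.card : ℕ)) := ENNReal.ofReal_le_ofReal h1
      _ = ENNReal.ofReal (∑ S ∈ T.powerset, δ ^ S.card) := by rw [h2]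
      _ = ∑ S ∈ T.powerset, ENNReal.ofReal (δ ^ S.card) := by
          rw [ENNReal.ofReal_sum_of_nonneg]
          intro S _; positivity
      _ = ∑ S ∈ T.powerset, ENNReal.ofReal (δ ^ S.card) * (H S).indicator 1 ω := by
          apply Finset.sum_congr rfl
          intro S hSm; rw [h3 S hSm, mul_one]
      _ ≤ f ω := Finset.sum_le_sum_of_subset (Finset.subset_univ _)
  -- integral bound
  have hint : ∫⁻ ω, f ω ∂μ ≤ ENNReal.ofReal ((1 + δ * p) ^ m) := by
    have : ∫⁻ ω, f ω ∂μ = ∑ S : Finset (Fin m), ENNReal.ofReal (δ ^ S.card) * μ (E S) := by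
      simp only [hf, hH]
      have hmeas' : ∀ S ∈ (Finset.univ : Finset (Finset (Fin m))),
          Measurable (fun ω => ENNReal.ofReal (δ ^ S.card) *
            (toMeasurable μ (E S)).indicator (1 : Ω → ENNReal) ω) := fun S _ =>
        (measurable_one.indicator (measurableSet_toMeasurable μ _)).const_mul _
      rw [lintegral_finset_sum _ hmeas']
      apply Finset.sum_congr rfl
      intro S _
      rw [lintegral_const_mul _ (measurable_one.indicator (measurableSet_toMeasurable μ _)),
        lintegral_indicator (measurableSet_toMeasurable μ _)]
      simp only [Pi.one_apply]
      rw [setLIntegral_one, measure_toMeasurable]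
    rw [this]
    calc ∑ S : Finset (Fin m), ENNReal.ofReal (δ ^ S.card) * μ (E S)
        ≤ ∑ S : Finset (Fin m), ENNReal.ofReal (δ ^ S.card) * ENNReal.ofReal (p ^ S.card) := by
          apply Finset.sum_le_sum
          intro S _
          exact mul_le_mul_right (hS S) _
      _ = ∑ S : Finset (Fin m), ENNReal.ofReal ((δ * p) ^ S.card) := by
          apply Finset.sum_congr rfl
          intro S _
          rw [← ENNReal.ofReal_mul (by positivity), mul_pow]
      _ = ENNReal.ofReal (∑ S : Finset (Fin m), (δ * p) ^ S.card) := by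
          rw [ENNReal.ofReal_sum_of_nonneg]
          intro S _; positivity
      _ = ENNReal.ofReal ((1 + δ * p) ^ m) := by
          congr 1
          rw [← Finset.powerset_univ, sum_powerset_pow_card]
          simp
  -- Markov
  have hmarkov : c * μ {ω | a ≤ ∑ i, X i ω} ≤ ENNReal.ofReal ((1 + δ * p) ^ m) := by
    calc c * μ {ω | a ≤ ∑ i, X i ω} ≤ c * μ {ω | c ≤ f ω} := by
          exact mul_le_mul_right (measure_mono hpt) _
      _ ≤ ∫⁻ ω, f ω ∂μ := mul_meas_ge_le_lintegral₀ hfmeas.aemeasurable c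
      _ ≤ _ := hint
  have hcpos : 0 < (1 + δ) ^ a := Real.rpow_pos_of_pos (by linarith) a
  have hc0 : c ≠ 0 := by
    rw [hc]; exact (ENNReal.ofReal_pos.mpr hcpos).ne'
  have hctop : c ≠ ⊤ := ENNReal.ofReal_ne_top
  have hdiv : μ {ω | a ≤ ∑ i, X i ω} ≤ ENNReal.ofReal ((1 + δ * p) ^ m / (1 + δ) ^ a) := by
    rw [ENNReal.ofReal_div_of_pos hcpos]
    rw [ENNReal.le_div_iff_mul_le (Or.inl hc0) (Or.inl hctop)]
    rw [mul_comm]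
    exact hmarkov
  refine hdiv.trans (ENNReal.ofReal_le_ofReal ?_)
  -- real inequality
  have hrhs : (Real.exp δ / (1 + δ) ^ (1 + δ)) ^ ((m : ℝ) * p)
      = Real.exp (δ * (m * p)) / (1 + δ) ^ a := by
    rw [Real.div_rpow (Real.exp_nonneg δ) (Real.rpow_nonneg (by linarith) _),
      ← Real.exp_mul, ← Real.rpow_mul (by linarith : (0:ℝ) ≤ 1 + δ), ha, mul_assoc]
  rw [hrhs]
  gcongr
  calc (1 + δ * p) ^ m ≤ Real.exp (δ * p) ^ m := by
          apply pow_le_pow_left₀ (by positivity)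
          linarith [Real.add_one_le_exp (δ * p)]
    _ = Real.exp (δ * (↑m * p)) := by rw [← Real.exp_nat_mul]; ring_nf
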